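/- Let P be a finite poset whose Hasse diagram, viewed as an undirected graph, is a path e₁ — e₂ — ... — eₙ (a 'fence-like' poset where each consecutive pair is a cover relation in one direction or the other, and these are the only covers). Then the number of order ideals of P satisfies the recursion: if eₙ₋₁ ⋖ eₙ then N(P) = N(P \ {eₙ}) + N(P \ {eₙ₋₁, eₙ}) when eₙ₋₂ ⋗ eₙ₋₁, and more generally the number of order ideals of any such path-shaped poset on n elements is at least n+1 and at most the (n+2)-nd Fibonacci number, with the maximum attained exactly by the zigzag (alternating) orientation. -/

import Mathlib

/-!
Recording which elements of the path lie in an order ideal identifies the ideals with Boolean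
words along the path that are monotone across each edge, in the direction the edge prescribes.
Sorting the words by their last letter gives a transfer recursion for the number `T m` of words
on `m` edges: `T (m + 1) = T m + c m`, where `c m` counts the words ending in the letter that
may follow only a copy of itself across edge `m`. One step later `c (m + 1) = T m` if the
orientation switches between edges `m` and `m + 1`, and `c (m + 1) = c m < T m` otherwise.
So `T (m + 2) ≤ T (m + 1) + T m` from `T 0 = 2`, `T 1 = 3`, with equality all the way exactly
for zigzags, while `c m ≥ 1` gives the linear lower bound.
-/

open Finset
open scoped Classical

/-- An order ideal (down-closed subset) of a poset, as a `Finset`. -/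
def IsIdealF {P : Type*} [PartialOrder P] (I : Finset P) : Prop :=
  ∀ x ∈ I, ∀ y, y ≤ x → y ∈ I

/-- The weighted sum of order ideals: `F(P) = Σ_I Π_{e ∈ I} w e`. -/
noncomputable def idealSum (P : Type*) [Fintype P] [PartialOrder P] {R : Type*}
    [CommSemiring R] (w : P → R) : R :=
  ∑ I ∈ Finset.univ.filter (fun I : Finset P => IsIdealF I), ∏ e ∈ I, w e

section ChainBy

variable {α : Type*} (R : ℕ → α → α → Prop)

def IsChainBy {n : ℕ} (s : Fin n → α) : Prop :=
  ∀ i (h : i + 1 < n), R i (s ⟨i, Nat.lt_of_succ_lt h⟩) (s ⟨i + 1, h⟩)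

variable {R}

theorem isChainBy_snoc {m : ℕ} (t : Fin (m + 1) → α) (c : α) :
    IsChainBy R (Fin.snoc t c : Fin (m + 2) → α) ↔
      IsChainBy R t ∧ R m (t (Fin.last m)) c := by
  have snoc_lt : ∀ i (h : i < m + 1) (h' : i < m + 2),
      (Fin.snoc t c : Fin (m + 2) → α) ⟨i, h'⟩ = t ⟨i, h⟩ :=
    fun i h _ => Fin.snoc_castSucc (α := fun _ => α) c t ⟨i, h⟩
  have snoc_last : ∀ h : m + 1 < m + 2, (Fin.snoc t c : Fin (m + 2) → α) ⟨m + 1, h⟩ = c :=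
    fun _ => Fin.snoc_last (α := fun _ => α) c t
  constructor
  · intro hs
    refine ⟨fun i h => ?_, ?_⟩
    · have := hs i (by omega)
      rwa [snoc_lt i (by omega), snoc_lt (i + 1) h] at this
    · have := hs m (by omega)
      rwa [snoc_lt m (by omega), snoc_last] at this
  · rintro ⟨ht, hlast⟩ i h
    obtain h' | rfl : i + 1 < m + 1 ∨ i = m := by omega
    · rw [snoc_lt i (by omega), snoc_lt (i + 1) h']
      exact ht i h'
    · rw [snoc_lt i (by omega), snoc_last]
      exact hlast

variable [Fintype α]

variable (R) in
noncomputable def chainCount : ℕ → α → ℕ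
  | 0, _ => 1
  | m + 1, c => ∑ b with R m b c, chainCount m b

theorem card_isChainBy_snoc_eq (m : ℕ) (c : α) :
    #{s : Fin (m + 2) → α | IsChainBy R s ∧ s (Fin.last (m + 1)) = c} =
      #{t : Fin (m + 1) → α | IsChainBy R t ∧ R m (t (Fin.last m)) c} := by
  refine card_nbij' Fin.init (fun t => Fin.snoc t c) ?_ ?_ ?_ ?_
  · intro s hs
    simp only [mem_coe, mem_filter, mem_univ, true_and] at hs ⊢
    rw [← isChainBy_snoc, ← hs.2, Fin.snoc_init_self]
    exact hs.1
  · intro t ht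
    simp only [mem_coe, mem_filter, mem_univ, true_and] at ht ⊢
    exact ⟨(isChainBy_snoc t c).2 ht, Fin.snoc_last (α := fun _ => α) c t⟩
  · intro s hs
    simp only [mem_coe, mem_filter, mem_univ, true_and] at hs
    rw [← hs.2]
    exact Fin.snoc_init_self s
  · intro t _
    exact Fin.init_snoc (α := fun _ => α) c t

theorem card_isChainBy_last_eq (m : ℕ) (c : α) :
    #{s : Fin (m + 1) → α | IsChainBy R s ∧ s (Fin.last m) = c} = chainCount R m c := by
  induction m generalizing c with
  | zero =>
    rw [chainCount, card_eq_one]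
    refine ⟨fun _ => c, eq_singleton_iff_unique_mem.2 ⟨?_, fun s hs => ?_⟩⟩
    · simp [IsChainBy]
    · funext i
      rw [Subsingleton.elim (α := Fin 1) i (Fin.last 0)]
      exact (mem_filter.1 hs).2.2
  | succ m ih =>
    rw [card_isChainBy_snoc_eq, card_eq_sum_card_fiberwise (f := fun t => t (Fin.last m))
      (t := univ.filter (R m · c)), chainCount]
    · refine sum_congr rfl fun b hb => ?_
      rw [← ih b, filter_filter]
      congr 1
      ext t
      simp only [mem_filter, mem_univ, true_and] at hb ⊢
      constructor
      · exact fun h => ⟨h.1.1, h.2⟩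
      · rintro ⟨h, rfl⟩
        exact ⟨⟨h, hb⟩, rfl⟩
    · intro t ht
      simpa using (mem_filter.1 ht).2.2

theorem card_isChainBy (m : ℕ) :
    #{s : Fin (m + 1) → α | IsChainBy R s} = ∑ c, chainCount R m c := by
  rw [card_eq_sum_card_fiberwise (f := fun s => s (Fin.last m)) (t := univ) (by simp)]
  refine sum_congr rfl fun c _ => ?_
  rw [← card_isChainBy_last_eq, filter_filter]

end ChainBy

section Fence

variable (d : ℕ → Bool)

/-- `d i` says that position `i` lies below position `i + 1`; a chain of membership flags
must then not have `i + 1` in and `i` out. -/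
def fenceRel (i : ℕ) (x y : Bool) : Prop := if d i then y ≤ x else x ≤ y

noncomputable def fenceCount (m : ℕ) : ℕ := ∑ c, chainCount (fenceRel d) m c

def IsZigzag (m : ℕ) : Prop := ∀ i, i + 1 < m → d (i + 1) ≠ d i

variable {d}

theorem IsZigzag.of_succ {m : ℕ} (h : IsZigzag d (m + 1)) : IsZigzag d m :=
  fun i hi => h i (by omega)

theorem isZigzag_add_two {m : ℕ} :
    IsZigzag d (m + 2) ↔ IsZigzag d (m + 1) ∧ d (m + 1) ≠ d m := by
  refine ⟨fun h => ⟨h.of_succ, h m (by omega)⟩, fun ⟨h, hm⟩ i hi => ?_⟩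
  obtain hi | rfl : i + 1 < m + 1 ∨ i = m := by omega
  exacts [h i hi, hm]

theorem chainCount_fenceRel_succ_self (m : ℕ) :
    chainCount (fenceRel d) (m + 1) (d m) = chainCount (fenceRel d) m (d m) := by
  cases h : d m <;> simp [chainCount, fenceRel, h, sum_filter]

theorem chainCount_fenceRel_succ_not (m : ℕ) :
    chainCount (fenceRel d) (m + 1) (!d m) = fenceCount d m := by
  cases h : d m <;> simp [chainCount, fenceCount, fenceRel, h]

theorem fenceCount_zero : fenceCount d 0 = 2 := by
  simp [fenceCount, chainCount]

theorem fenceCount_succ (m : ℕ) :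
    fenceCount d (m + 1) = fenceCount d m + chainCount (fenceRel d) m (d m) := by
  have hsum : fenceCount d (m + 1) =
      chainCount (fenceRel d) (m + 1) (d m) + chainCount (fenceRel d) (m + 1) (!d m) := by
    rw [fenceCount, Fintype.sum_bool]
    cases d m
    exacts [add_comm _ _, rfl]
  rw [hsum, chainCount_fenceRel_succ_self, chainCount_fenceRel_succ_not, add_comm]

theorem chainCount_fenceRel_pos (m : ℕ) (c : Bool) : 0 < chainCount (fenceRel d) m c := by
  induction m generalizing c with
  | zero => simp [chainCount]
  | succ m ih =>
    obtain rfl | rfl : c = d m ∨ c = !d m := by cases c <;> cases d m <;> simp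
    · rw [chainCount_fenceRel_succ_self]
      exact ih _
    · rw [chainCount_fenceRel_succ_not, fenceCount]
      exact sum_pos (fun c _ => ih c) univ_nonempty

theorem chainCount_fenceRel_lt_fenceCount (m : ℕ) (c : Bool) :
    chainCount (fenceRel d) m c < fenceCount d m := by
  have := chainCount_fenceRel_pos (d := d) m (!c)
  rw [fenceCount, Fintype.sum_bool]
  cases c <;> simp only [Bool.not_true, Bool.not_false] at this <;> omega

theorem chainCount_fenceRel_succ_eq_or_lt (m : ℕ) :
    chainCount (fenceRel d) (m + 1) (d (m + 1)) = fenceCount d m ∧ d (m + 1) ≠ d m ∨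
      chainCount (fenceRel d) (m + 1) (d (m + 1)) < fenceCount d m ∧ d (m + 1) = d m := by
  by_cases h : d (m + 1) = d m
  · right
    rw [h, chainCount_fenceRel_succ_self]
    exact ⟨chainCount_fenceRel_lt_fenceCount m _, rfl⟩
  · refine .inl ⟨?_, h⟩
    rw [Bool.eq_not_of_ne h, chainCount_fenceRel_succ_not]

theorem add_two_le_fenceCount (m : ℕ) : m + 2 ≤ fenceCount d m := by
  induction m with
  | zero => rw [fenceCount_zero]
  | succ m ih =>
    have := chainCount_fenceRel_pos (d := d) m (d m)
    rw [fenceCount_succ]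
    omega

theorem fenceCount_one : fenceCount d 1 = 3 := by
  rw [fenceCount_succ, fenceCount_zero]
  rfl

theorem fenceCount_le_fib (m : ℕ) : fenceCount d m ≤ Nat.fib (m + 3) := by
  induction m using Nat.twoStepInduction with
  | zero => rw [fenceCount_zero]; rfl
  | one => rw [fenceCount_one]; rfl
  | more m ih₀ ih₁ =>
    have hfib : Nat.fib (m + 2 + 3) = Nat.fib (m + 3) + Nat.fib (m + 1 + 3) := Nat.fib_add_two
    have := chainCount_fenceRel_succ_eq_or_lt (d := d) m
    rw [fenceCount_succ]
    omega

theorem fenceCount_eq_fib_iff (m : ℕ) : fenceCount d m = Nat.fib (m + 3) ↔ IsZigzag d m := by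
  induction m using Nat.twoStepInduction with
  | zero => simp [fenceCount_zero, IsZigzag, Nat.fib_add_two]
  | one => simp [fenceCount_one, IsZigzag, Nat.fib_add_two]
  | more m ih₀ ih₁ =>
    have hfib : Nat.fib (m + 2 + 3) = Nat.fib (m + 3) + Nat.fib (m + 1 + 3) := Nat.fib_add_two
    have h₀ := fenceCount_le_fib (d := d) m
    have h₁ := fenceCount_le_fib (d := d) (m + 1)
    rw [fenceCount_succ]
    rcases chainCount_fenceRel_succ_eq_or_lt (d := d) m with ⟨heq, hne⟩ | ⟨hlt, heq⟩
    · have both : fenceCount d (m + 1) + fenceCount d m = Nat.fib (m + 2 + 3) ↔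
          fenceCount d (m + 1) = Nat.fib (m + 1 + 3) ∧ fenceCount d m = Nat.fib (m + 3) := by
        omega
      rw [heq, both, ih₀, ih₁, isZigzag_add_two]
      exact ⟨fun h => ⟨h.1, hne⟩, fun h => ⟨h.1, h.1.of_succ⟩⟩
    · exact iff_of_false (by omega) fun h => (isZigzag_add_two.1 h).2 heq

end Fence

section PathPoset

variable {P : Type*} [PartialOrder P]

theorem isIdealF_iff_covBy [LocallyFiniteOrder P] (I : Finset P) :
    IsIdealF I ↔ ∀ x y : P, x ⋖ y → y ∈ I → x ∈ I := by
  refine ⟨fun hI x y hxy hy => hI y hy x hxy.le, fun h y hy x hxy => ?_⟩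
  replace hxy := le_iff_reflTransGen_covBy.1 hxy
  induction hxy using Relation.ReflTransGen.head_induction_on with
  | refl => exact hy
  | head hab _ ih => exact h _ _ hab ih

section

variable {n : ℕ} (e : Fin n ≃ P)

def ConsecutiveCovBy : Prop :=
  ∀ i (h : i + 1 < n),
    e ⟨i, Nat.lt_of_succ_lt h⟩ ⋖ e ⟨i + 1, h⟩ ∨ e ⟨i + 1, h⟩ ⋖ e ⟨i, Nat.lt_of_succ_lt h⟩

def CovByOnlyConsecutive : Prop :=
  ∀ x y : P, x ⋖ y → ∃ i, ∃ h : i + 1 < n,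
    (x = e ⟨i, Nat.lt_of_succ_lt h⟩ ∧ y = e ⟨i + 1, h⟩) ∨
      (y = e ⟨i, Nat.lt_of_succ_lt h⟩ ∧ x = e ⟨i + 1, h⟩)

noncomputable def pathOrientation (i : ℕ) : Bool :=
  decide (∃ h : i + 1 < n, e ⟨i, Nat.lt_of_succ_lt h⟩ ⋖ e ⟨i + 1, h⟩)

variable {e}

theorem pathOrientation_eq_true_iff {i : ℕ} (h : i + 1 < n) :
    pathOrientation e i = true ↔ e ⟨i, Nat.lt_of_succ_lt h⟩ ⋖ e ⟨i + 1, h⟩ := by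
  simp [pathOrientation, h]

theorem pathOrientation_eq_false_iff (hcov : ConsecutiveCovBy e) {i : ℕ} (h : i + 1 < n) :
    pathOrientation e i = false ↔ e ⟨i + 1, h⟩ ⋖ e ⟨i, Nat.lt_of_succ_lt h⟩ := by
  rw [Bool.eq_false_iff, ne_eq, pathOrientation_eq_true_iff h]
  exact ⟨(hcov i h).resolve_left, fun hdown hup => hup.lt.not_gt hdown.lt⟩

theorem isIdealF_iff_isChainBy (hcov : ConsecutiveCovBy e) (honly : CovByOnlyConsecutive e)
    (I : Finset P) :
    IsIdealF I ↔ IsChainBy (fenceRel (pathOrientation e)) fun j => decide (e j ∈ I) := by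
  have : Fintype P := Fintype.ofEquiv _ e
  have : LocallyFiniteOrder P := Fintype.toLocallyFiniteOrder
  rw [isIdealF_iff_covBy]
  constructor
  · intro hI i hi
    unfold fenceRel
    split_ifs with hup
    · simpa [Bool.le_iff_imp] using hI _ _ ((pathOrientation_eq_true_iff hi).1 hup)
    · simpa [Bool.le_iff_imp] using
        hI _ _ ((pathOrientation_eq_false_iff hcov hi).1 (Bool.eq_false_iff.2 hup))
  · intro hs x y hxy hy
    obtain ⟨i, hi, ⟨rfl, rfl⟩ | ⟨rfl, rfl⟩⟩ := honly x y hxy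
    · have := hs i hi
      rw [fenceRel, if_pos ((pathOrientation_eq_true_iff hi).2 hxy)] at this
      simpa [Bool.le_iff_imp, hy] using this
    · have := hs i hi
      rw [fenceRel, if_neg (by simp [(pathOrientation_eq_false_iff hcov hi).2 hxy])] at this
      simpa [Bool.le_iff_imp, hy] using this

end

theorem isZigzag_pathOrientation_iff {m : ℕ} {e : Fin (m + 1) ≃ P}
    (hcov : ConsecutiveCovBy e) :
    IsZigzag (pathOrientation e) m ↔ ∀ i, ∀ h : i + 2 < m + 1,
      (e ⟨i, Nat.lt_of_add_right_lt h⟩ ⋖ e ⟨i + 1, Nat.lt_of_succ_lt h⟩ ↔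
        e ⟨i + 2, h⟩ ⋖ e ⟨i + 1, Nat.lt_of_succ_lt h⟩) := by
  have flip : ∀ a b : Bool, b ≠ a ↔ (a = true ↔ b = false) := by decide
  refine forall_congr' fun i => ⟨fun hz h => ?_, fun hz h => ?_⟩
  · rw [← pathOrientation_eq_true_iff, ← pathOrientation_eq_false_iff hcov (i := i + 1) h]
    exact (flip _ _).1 (hz (by omega))
  · have hi : i + 1 + 1 < m + 1 := by omega
    rw [flip, pathOrientation_eq_true_iff, pathOrientation_eq_false_iff hcov hi]
    exact hz (by omega)

theorem card_isIdealF_eq_fenceCount {m : ℕ} {e : Fin (m + 1) ≃ P} (hcov : ConsecutiveCovBy e)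
    (honly : CovByOnlyConsecutive e) :
    Nat.card {I : Finset P // IsIdealF I} = fenceCount (pathOrientation e) m := by
  let flags : Finset P ≃ (Fin (m + 1) → Bool) :=
    { toFun I j := decide (e j ∈ I)
      invFun s := (univ.filter fun j => s j).map e.toEmbedding
      left_inv I := by ext; simp
      right_inv s := by funext; simp }
  rw [Nat.card_congr (flags.subtypeEquiv (isIdealF_iff_isChainBy hcov honly)),
    Nat.card_eq_fintype_card, Fintype.card_subtype, card_isChainBy, fenceCount]

end PathPoset

/-- for a poset whose Hasse diagram is a path on n elements, the number of
order ideals is at least n+1 and at most Fib(n+2), with the maximum attained exactly by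
the zigzag (alternating) orientation. -/
theorem stmt8 {P : Type*} [PartialOrder P] (n : ℕ) (hn : 1 ≤ n) (e : Fin n ≃ P)
    (hcov : ∀ i : ℕ, ∀ h : i + 1 < n,
      e ⟨i, by omega⟩ ⋖ e ⟨i + 1, h⟩ ∨ e ⟨i + 1, h⟩ ⋖ e ⟨i, by omega⟩)
    (honly : ∀ x y : P, x ⋖ y → ∃ i : ℕ, ∃ h : i + 1 < n,
      (x = e ⟨i, by omega⟩ ∧ y = e ⟨i + 1, h⟩) ∨
        (y = e ⟨i, by omega⟩ ∧ x = e ⟨i + 1, h⟩)) :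
    n + 1 ≤ Nat.card {I : Finset P // IsIdealF I} ∧
      Nat.card {I : Finset P // IsIdealF I} ≤ Nat.fib (n + 2) ∧
      (Nat.card {I : Finset P // IsIdealF I} = Nat.fib (n + 2) ↔
        ∀ i : ℕ, ∀ h : i + 2 < n,
          (e ⟨i, by omega⟩ ⋖ e ⟨i + 1, by omega⟩ ↔
            e ⟨i + 2, h⟩ ⋖ e ⟨i + 1, by omega⟩)) := by
  obtain ⟨m, rfl⟩ : ∃ m, n = m + 1 := ⟨n - 1, by omega⟩
  rw [card_isIdealF_eq_fenceCount hcov honly, ← isZigzag_pathOrientation_iff hcov]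
  exact ⟨add_two_le_fenceCount m, fenceCount_le_fib m, fenceCount_eq_fib_iff m⟩
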